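/- arXiv:2006.10241 — 2 statements merged into one kernel-verified Lean document; each statement's English description precedes it below -/
import Mathlib

section
/- Combining the previous results: the minimum over O ∈ SO(2) and c ∈ ℝ² of Σᵢ wᵢ‖aᵢ − O·bᵢ − c‖² equals Σᵢ wᵢ‖aᵢ−ā‖² + Σᵢ wᵢ‖bᵢ−b̄‖² − 2(d₁ + det(VᵀU)·d₂), where U D Vᵀ is the SVD of the cross-covariance matrix Σᵢ wᵢ(bᵢ−b̄)(aᵢ−ā)ᵀ with singular values d₁ ≥ d₂ ≥ 0. -/
open Matrix Finset

/-- Squared Euclidean norm on ℝ². -/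
def sqnorm2 (v : Fin 2 → ℝ) : ℝ := ∑ j, v j ^ 2

/-- Weighted mean of vectors. -/
def wmean {n : ℕ} (w : Fin n → ℝ) (a : Fin n → Fin 2 → ℝ) : Fin 2 → ℝ := ∑ i, w i • a i

/-!
By the parallel axis theorem the optimal translation is `c = ā - O b̄`, and what remains of the
objective is `∑ wᵢ‖aᵢ - ā‖² + ∑ wᵢ‖bᵢ - b̄‖² - 2 tr (O K)` with `K = U D Vᵀ` the cross-covariance.
Since `tr (O U D Vᵀ) = tr (R D)` for the orthogonal matrix `R = Vᵀ O U` of determinant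
`det (Vᵀ U)`, and a 2 × 2 orthogonal `R` has `R₁₁ = det R · R₀₀` with `R₀₀ ≤ 1`, the trace is at
most `d₁ + det (Vᵀ U) d₂`; equality holds for `R = diag (1, det (Vᵀ U))`, i.e.
`O = V diag (1, det (Vᵀ U)) Uᵀ`.
-/

namespace Matrix

variable {n : Type*} [Fintype n] [DecidableEq n] {A : Matrix n n ℝ}

lemma adjugate_eq_det_smul_transpose_of_mem_orthogonalGroup
    (hA : A ∈ orthogonalGroup n ℝ) : A.adjugate = A.det • Aᵀ :=
  calc A.adjugate = (Aᵀ * A) * A.adjugate := by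
        rw [(mem_orthogonalGroup_iff' n ℝ).1 hA, one_mul]
    _ = A.det • Aᵀ := by rw [mul_assoc, mul_adjugate, Matrix.mul_smul, mul_one]

lemma apply_le_one_of_mem_orthogonalGroup (hA : A ∈ orthogonalGroup n ℝ) (i j : n) :
    A i j ≤ 1 := by
  have hcol : ∑ k, A k j ^ 2 = 1 := by
    simpa [mul_apply, sq] using congrFun₂ ((mem_orthogonalGroup_iff' n ℝ).1 hA) j j
  have hsq : A i j ^ 2 ≤ 1 :=
    hcol ▸ single_le_sum (f := fun k => A k j ^ 2) (fun k _ => sq_nonneg _) (mem_univ i)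
  exact (abs_le.1 (sq_le_one_iff_abs_le_one _ |>.1 hsq)).2

lemma det_mul_self_of_mem_orthogonalGroup (hA : A ∈ orthogonalGroup n ℝ) :
    A.det * A.det = 1 := by
  simpa [det_mul, det_transpose] using congrArg det ((mem_orthogonalGroup_iff n ℝ).1 hA)

lemma transpose_mem_orthogonalGroup (hA : A ∈ orthogonalGroup n ℝ) :
    Aᵀ ∈ orthogonalGroup n ℝ := by
  rw [mem_orthogonalGroup_iff, transpose_transpose]
  exact (mem_orthogonalGroup_iff' n ℝ).1 hA

variable {R : Matrix (Fin 2) (Fin 2) ℝ}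

lemma apply_one_one_eq_det_mul_of_mem_orthogonalGroup
    (hR : R ∈ orthogonalGroup (Fin 2) ℝ) : R 1 1 = R.det * R 0 0 := by
  simpa [adjugate_fin_two] using
    congrFun₂ (adjugate_eq_det_smul_transpose_of_mem_orthogonalGroup hR) 0 0

/-- The two-dimensional case of von Neumann's trace inequality. -/
lemma trace_mul_diagonal_le_of_mem_orthogonalGroup
    (hR : R ∈ orthogonalGroup (Fin 2) ℝ) {d1 d2 : ℝ} (h12 : d2 ≤ d1) (h2 : 0 ≤ d2) :
    (R * diagonal ![d1, d2]).trace ≤ d1 + R.det * d2 := by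
  have htrace : (R * diagonal ![d1, d2]).trace = R 0 0 * (d1 + R.det * d2) := by
    simp [trace, Fin.sum_univ_two, apply_one_one_eq_det_mul_of_mem_orthogonalGroup hR]
    ring
  have hdet : R.det = 1 ∨ R.det = -1 :=
    mul_self_eq_one_iff.1 (det_mul_self_of_mem_orthogonalGroup hR)
  have hpos : 0 ≤ d1 + R.det * d2 := by rcases hdet with h | h <;> rw [h] <;> linarith
  rw [htrace]
  exact mul_le_of_le_one_left hpos (apply_le_one_of_mem_orthogonalGroup hR 0 0)

end Matrix

lemma sqnorm2_eq_dotProduct (v : Fin 2 → ℝ) : sqnorm2 v = v ⬝ᵥ v := by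
  simp [sqnorm2, dotProduct, sq]

lemma sqnorm2_nonneg (v : Fin 2 → ℝ) : 0 ≤ sqnorm2 v :=
  sum_nonneg fun j _ => sq_nonneg (v j)

lemma sqnorm2_add (x y : Fin 2 → ℝ) :
    sqnorm2 (x + y) = sqnorm2 x + 2 * (x ⬝ᵥ y) + sqnorm2 y := by
  simp only [sqnorm2_eq_dotProduct, add_dotProduct, dotProduct_add, dotProduct_comm y x]
  ring

lemma sqnorm2_sub (x y : Fin 2 → ℝ) :
    sqnorm2 (x - y) = sqnorm2 x - 2 * (x ⬝ᵥ y) + sqnorm2 y := by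
  simp only [sqnorm2_eq_dotProduct, sub_dotProduct, dotProduct_sub, dotProduct_comm y x]
  ring

lemma sqnorm2_mulVec_of_mem_orthogonalGroup {O : Matrix (Fin 2) (Fin 2) ℝ}
    (hO : O ∈ orthogonalGroup (Fin 2) ℝ) (v : Fin 2 → ℝ) : sqnorm2 (O *ᵥ v) = sqnorm2 v := by
  rw [sqnorm2_eq_dotProduct, sqnorm2_eq_dotProduct, dotProduct_mulVec, ← vecMul_transpose,
    vecMul_vecMul, (mem_orthogonalGroup_iff' (Fin 2) ℝ).1 hO, vecMul_one]

lemma sqnorm2_sub_mulVec_of_mem_orthogonalGroup {O : Matrix (Fin 2) (Fin 2) ℝ}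
    (hO : O ∈ orthogonalGroup (Fin 2) ℝ) (x y : Fin 2 → ℝ) :
    sqnorm2 (x - O *ᵥ y) = sqnorm2 x + sqnorm2 y - 2 * (O * vecMulVec y x).trace := by
  rw [sqnorm2_sub, sqnorm2_mulVec_of_mem_orthogonalGroup hO, mul_vecMulVec, trace_vecMulVec,
    dotProduct_comm]
  ring

def crossCov {n : ℕ} (w : Fin n → ℝ) (a b : Fin n → Fin 2 → ℝ) : Matrix (Fin 2) (Fin 2) ℝ :=
  ∑ i, w i • vecMulVec (b i - wmean w b) (a i - wmean w a)

section WeightedSums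

variable {n : ℕ} {w : Fin n → ℝ}

lemma sum_smul_sub_wmean (hsum : ∑ i, w i = 1) (x : Fin n → Fin 2 → ℝ) :
    ∑ i, w i • (x i - wmean w x) = 0 := by
  simp only [smul_sub, sum_sub_distrib, ← sum_smul, hsum, one_smul, wmean, sub_self]

lemma wmean_sub_mulVec (a b : Fin n → Fin 2 → ℝ) (O : Matrix (Fin 2) (Fin 2) ℝ) :
    wmean w (fun i => a i - O *ᵥ b i) = wmean w a - O *ᵥ wmean w b := by
  simp only [wmean, smul_sub, sum_sub_distrib, mulVec_sum, mulVec_smul]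

/-- The parallel axis theorem. -/
lemma sum_mul_sqnorm2_sub (hsum : ∑ i, w i = 1) (x : Fin n → Fin 2 → ℝ) (c : Fin 2 → ℝ) :
    ∑ i, w i * sqnorm2 (x i - c)
      = ∑ i, w i * sqnorm2 (x i - wmean w x) + sqnorm2 (wmean w x - c) := by
  have hcross : ∑ i, w i * (x i - wmean w x) ⬝ᵥ (wmean w x - c) = 0 := by
    simp_rw [← smul_eq_mul, ← smul_dotProduct, ← sum_dotProduct, sum_smul_sub_wmean hsum,
      zero_dotProduct]
  calc ∑ i, w i * sqnorm2 (x i - c)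
      = ∑ i, (w i * sqnorm2 (x i - wmean w x)
          + 2 * (w i * (x i - wmean w x) ⬝ᵥ (wmean w x - c))
          + w i * sqnorm2 (wmean w x - c)) := by
        refine sum_congr rfl fun i _ => ?_
        rw [← sub_add_sub_cancel (x i) (wmean w x) c, sqnorm2_add]
        ring
    _ = _ := by
        rw [sum_add_distrib, sum_add_distrib, ← mul_sum, hcross, ← sum_mul, hsum]
        ring

lemma sum_mul_sqnorm2_sub_mulVec_sub (hsum : ∑ i, w i = 1) (a b : Fin n → Fin 2 → ℝ)
    {O : Matrix (Fin 2) (Fin 2) ℝ} (hO : O ∈ orthogonalGroup (Fin 2) ℝ) (c : Fin 2 → ℝ) :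
    ∑ i, w i * sqnorm2 (a i - O *ᵥ b i - c)
      = ∑ i, w i * sqnorm2 (a i - wmean w a) + ∑ i, w i * sqnorm2 (b i - wmean w b)
        - 2 * (O * crossCov w a b).trace + sqnorm2 (wmean w a - O *ᵥ wmean w b - c) := by
  have hcentre : ∀ i, a i - O *ᵥ b i - (wmean w a - O *ᵥ wmean w b)
      = (a i - wmean w a) - O *ᵥ (b i - wmean w b) := fun i => by
    rw [mulVec_sub]; abel
  have htrace : ∑ i, w i * (O * vecMulVec (b i - wmean w b) (a i - wmean w a)).trace
      = (O * crossCov w a b).trace := by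
    simp only [crossCov, Matrix.mul_sum, Matrix.mul_smul, trace_sum, trace_smul, smul_eq_mul]
  rw [sum_mul_sqnorm2_sub hsum (fun i => a i - O *ᵥ b i), wmean_sub_mulVec]
  simp only [hcentre, sqnorm2_sub_mulVec_of_mem_orthogonalGroup hO, mul_sub, mul_add,
    sum_sub_distrib, sum_add_distrib, ← htrace, mul_sum, mul_left_comm (w _) (2 : ℝ)]

end WeightedSums

section Witness

variable {U V : Matrix (Fin 2) (Fin 2) ℝ}

lemma diagonal_one_det_mem_orthogonalGroup (hU : U ∈ orthogonalGroup (Fin 2) ℝ)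
    (hV : V ∈ orthogonalGroup (Fin 2) ℝ) :
    diagonal ![1, (Vᵀ * U).det] ∈ orthogonalGroup (Fin 2) ℝ := by
  have hdet := det_mul_self_of_mem_orthogonalGroup
    (mul_mem (transpose_mem_orthogonalGroup hV) hU)
  rw [mem_orthogonalGroup_iff, diagonal_transpose, diagonal_mul_diagonal, ← diagonal_one]
  generalize (Vᵀ * U).det = ε at hdet ⊢
  congr 1
  ext j
  fin_cases j <;> simp [hdet]

lemma mul_diagonal_one_det_mul_transpose_mem_specialOrthogonalGroup
    (hU : U ∈ orthogonalGroup (Fin 2) ℝ) (hV : V ∈ orthogonalGroup (Fin 2) ℝ) :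
    V * diagonal ![1, (Vᵀ * U).det] * Uᵀ ∈ specialOrthogonalGroup (Fin 2) ℝ := by
  refine (mem_specialOrthogonalGroup_iff).2 ⟨mul_mem (mul_mem hV
    (diagonal_one_det_mem_orthogonalGroup hU hV)) (transpose_mem_orthogonalGroup hU), ?_⟩
  have hdet := det_mul_self_of_mem_orthogonalGroup
    (mul_mem (transpose_mem_orthogonalGroup hV) hU)
  simp only [det_mul, det_transpose, det_diagonal, Fin.prod_univ_two] at hdet ⊢
  simpa [mul_comm, mul_left_comm, mul_assoc] using hdet

end Witness

theorem procrustes_distance_computation_general {n : ℕ}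
    (a b : Fin n → Fin 2 → ℝ) (w : Fin n → ℝ)
    (hsum : ∑ i, w i = 1)
    (U V : Matrix (Fin 2) (Fin 2) ℝ) (d1 d2 : ℝ)
    (hU : U ∈ Matrix.orthogonalGroup (Fin 2) ℝ) (hV : V ∈ Matrix.orthogonalGroup (Fin 2) ℝ)
    (h12 : d2 ≤ d1) (h2 : 0 ≤ d2)
    (hSVD : ∑ i, w i • Matrix.vecMulVec (b i - wmean w b) (a i - wmean w a)
      = U * Matrix.diagonal ![d1, d2] * Vᵀ) :
    IsLeast {x : ℝ | ∃ O ∈ Matrix.specialOrthogonalGroup (Fin 2) ℝ, ∃ c : Fin 2 → ℝ,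
        x = ∑ i, w i * sqnorm2 (a i - O.mulVec (b i) - c)}
      (∑ i, w i * sqnorm2 (a i - wmean w a) + ∑ i, w i * sqnorm2 (b i - wmean w b)
        - 2 * (d1 + (Vᵀ * U).det * d2)) := by
  have hobjective := fun O (hO : O ∈ orthogonalGroup (Fin 2) ℝ) c =>
    sum_mul_sqnorm2_sub_mulVec_sub hsum a b hO c
  have hcyclic : ∀ O : Matrix (Fin 2) (Fin 2) ℝ,
      (O * crossCov w a b).trace = (Vᵀ * O * U * diagonal ![d1, d2]).trace := fun O => by
    rw [crossCov, hSVD, ← mul_assoc, trace_mul_comm]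
    simp only [Matrix.mul_assoc]
  constructor
  · have hO := mul_diagonal_one_det_mul_transpose_mem_specialOrthogonalGroup hU hV
    refine ⟨_, hO, wmean w a - (V * diagonal ![1, (Vᵀ * U).det] * Uᵀ) *ᵥ wmean w b, ?_⟩
    have hVOU : Vᵀ * (V * diagonal ![1, (Vᵀ * U).det] * Uᵀ) * U
        = diagonal ![1, (Vᵀ * U).det] := by
      simp only [← mul_assoc, (mem_orthogonalGroup_iff' _ ℝ).1 hV, one_mul]
      rw [mul_assoc, (mem_orthogonalGroup_iff' _ ℝ).1 hU, mul_one]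
    rw [hobjective _ hO.1, hcyclic, hVOU, sub_self, diagonal_mul_diagonal, trace_diagonal]
    simp [sqnorm2, Fin.sum_univ_two]
  · rintro _ ⟨O, hO, c, rfl⟩
    have hdet : (Vᵀ * O * U).det = (Vᵀ * U).det := by
      have hOdet : O.det = 1 := hO.2
      rw [det_mul, det_mul, hOdet, mul_one, det_mul]
    have hbound := trace_mul_diagonal_le_of_mem_orthogonalGroup
      (mul_mem (mul_mem (transpose_mem_orthogonalGroup hV) hO.1) hU) h12 h2
    rw [hdet] at hbound
    rw [hobjective O hO.1, hcyclic]
    linarith [sqnorm2_nonneg (wmean w a - O *ᵥ wmean w b - c)]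

/-- the minimum over `O ∈ SO(2)` and `c ∈ ℝ²` of `∑ᵢ wᵢ‖aᵢ − O·bᵢ − c‖²` equals
`∑ᵢ wᵢ‖aᵢ−ā‖² + ∑ᵢ wᵢ‖bᵢ−b̄‖² − 2(d₁ + det(VᵀU)·d₂)`, where `U diag(d₁,d₂) Vᵀ` is the SVD
of the cross-covariance matrix `∑ᵢ wᵢ(bᵢ−b̄)(aᵢ−ā)ᵀ`, `d₁ ≥ d₂ ≥ 0`. -/
theorem procrustes_distance_computation {n : ℕ} (hn : 1 ≤ n)
    (a b : Fin n → Fin 2 → ℝ) (w : Fin n → ℝ)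
    (hw : ∀ i, 0 ≤ w i) (hsum : ∑ i, w i = 1)
    (U V : Matrix (Fin 2) (Fin 2) ℝ) (d1 d2 : ℝ)
    (hU : U ∈ Matrix.orthogonalGroup (Fin 2) ℝ) (hV : V ∈ Matrix.orthogonalGroup (Fin 2) ℝ)
    (h12 : d2 ≤ d1) (h2 : 0 ≤ d2)
    (hSVD : ∑ i, w i • Matrix.vecMulVec (b i - wmean w b) (a i - wmean w a)
      = U * Matrix.diagonal ![d1, d2] * Vᵀ) :
    IsLeast {x : ℝ | ∃ O ∈ Matrix.specialOrthogonalGroup (Fin 2) ℝ, ∃ c : Fin 2 → ℝ,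
        x = ∑ i, w i * sqnorm2 (a i - O.mulVec (b i) - c)}
      (∑ i, w i * sqnorm2 (a i - wmean w a) + ∑ i, w i * sqnorm2 (b i - wmean w b)
        - 2 * (d1 + (Vᵀ * U).det * d2)) :=
  procrustes_distance_computation_general a b w hsum U V d1 d2 hU hV h12 h2 hSVD
end

section
/- For the second-order Wasserstein distance W₂ on probability measures over a metric space (X,d), and the empirical measure Pₙ = (1/n)Σᵢ δ_{xᵢ}, the minimization of W₂(P, Pₙ)² over discrete measures P supported on at most k points is equal to the k-means objective: min over sets S ⊆ X with |S| ≤ k of (1/n) Σᵢ min_{s ∈ S} d(xᵢ, s)². -/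
open MeasureTheory ENNReal

/-- The squared second-order Wasserstein distance between two measures on a metric space,
defined as the infimum over couplings of the integral of the squared distance. -/
noncomputable def W2sq {X : Type*} [MetricSpace X] [MeasurableSpace X]
    (P Q : Measure X) : ℝ :=
  sInf {r : ℝ | ∃ π : Measure (X × X), IsProbabilityMeasure π ∧
    π.map Prod.fst = P ∧ π.map Prod.snd = Q ∧ r = ∫ p, dist p.1 p.2 ^ 2 ∂π}

/-!
A measure supported on a finite set `S` can be coupled with `Pₙ` only by sending mass from
points of `S` to the data points, and each unit of mass arriving at `xᵢ` pays at least the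
squared distance from `xᵢ` to its nearest point of `S`; integrating against the second marginal
`Pₙ` bounds the coupling cost below by the k-means cost of `S`. Conversely, transporting each
atom `δ_{xᵢ}/n` to a nearest point of `S` is a coupling achieving that cost. Hence every value of
either minimization problem is dominated by a value of the other, and the infima agree.
-/

theorem integrable_of_ae_mem_finite {α E : Type*} [MeasurableSpace α]
    [MeasurableSingletonClass α] [NormedAddCommGroup E] {μ : Measure α} [IsFiniteMeasure μ]
    {s : Set α} (hs : s.Finite) (h : ∀ᵐ a ∂μ, a ∈ s) (f : α → E) : Integrable f μ := by
  have hf : IntegrableOn f (⋃ a ∈ s, {a}) μ :=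
    (integrableOn_finite_biUnion hs).2 fun _ _ => integrableOn_singleton
  rwa [Set.biUnion_of_singleton, IntegrableOn, Measure.restrict_eq_self_of_ae_mem h] at hf

section Empirical

variable {α β : Type*} [MeasurableSpace α] [MeasurableSpace β] {n : ℕ}

noncomputable def empiricalMeasure (a : Fin n → α) : Measure α :=
  (n : ℝ≥0∞)⁻¹ • ∑ i, Measure.dirac (a i)

theorem isProbabilityMeasure_empiricalMeasure (hn : 0 < n) (a : Fin n → α) :
    IsProbabilityMeasure (empiricalMeasure a) := by
  constructor
  simp [empiricalMeasure, ENNReal.inv_mul_cancel (Nat.cast_ne_zero.2 hn.ne')]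

theorem empiricalMeasure_apply_eq_zero {a : Fin n → α} {s : Set α} (hs : MeasurableSet s)
    (ha : ∀ i, a i ∉ s) : empiricalMeasure a s = 0 := by
  simp [empiricalMeasure, Measure.dirac_apply' _ hs, ha]

theorem map_empiricalMeasure {φ : α → β} (hφ : Measurable φ) (a : Fin n → α) :
    (empiricalMeasure a).map φ = empiricalMeasure (φ ∘ a) := by
  simp [empiricalMeasure, Measure.map_smul, Measure.map_finset_sum hφ.aemeasurable,
    Measure.map_dirac' hφ]

theorem integral_empiricalMeasure [MeasurableSingletonClass α] (a : Fin n → α) (f : α → ℝ) :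
    ∫ y, f y ∂empiricalMeasure a = (1 / (n : ℝ)) * ∑ i, f (a i) := by
  rw [empiricalMeasure, integral_smul_measure,
    integral_finsetSum_measure fun i _ => integrable_dirac (by finiteness)]
  simp [integral_dirac, ENNReal.toReal_inv]

end Empirical

section Transport

variable {X : Type*} [MetricSpace X]

/-- Equal to `0` when `S` is empty, since `sInf ∅ = 0` in `ℝ`. -/
noncomputable def sqDistToFinset (S : Finset X) (y : X) : ℝ :=
  sInf ((fun s => dist y s ^ 2) '' (↑S : Set X))

theorem sqDistToFinset_le {S : Finset X} {s : X} (hs : s ∈ S) (y : X) :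
    sqDistToFinset S y ≤ dist y s ^ 2 :=
  csInf_le ⟨0, by rintro r ⟨s, -, rfl⟩; positivity⟩ ⟨s, hs, rfl⟩

theorem exists_mem_sqDistToFinset_eq {S : Finset X} (hS : S.Nonempty) (y : X) :
    ∃ s ∈ S, dist y s ^ 2 = sqDistToFinset S y := by
  obtain ⟨s, hs, hmin⟩ := S.exists_min_image (fun s => dist y s ^ 2) hS
  refine ⟨s, hs, le_antisymm (le_csInf ⟨_, s, hs, rfl⟩ ?_) (sqDistToFinset_le hs y)⟩
  rintro r ⟨s', hs', rfl⟩
  exact hmin s' hs'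

variable [MeasurableSpace X]

theorem W2sq_le_integral {P Q : Measure X} {π : Measure (X × X)} [IsProbabilityMeasure π]
    (hfst : π.map Prod.fst = P) (hsnd : π.map Prod.snd = Q) :
    W2sq P Q ≤ ∫ p, dist p.1 p.2 ^ 2 ∂π := by
  refine csInf_le ⟨0, ?_⟩ ⟨π, inferInstance, hfst, hsnd, rfl⟩
  rintro r ⟨π', -, -, -, rfl⟩
  exact integral_nonneg fun p => by positivity

variable [MeasurableSingletonClass X]

theorem integral_sqDistToFinset_le_W2sq {P Q : Measure X} [IsProbabilityMeasure P]
    [IsProbabilityMeasure Q] {S : Finset X} {T : Set X} (hT : T.Finite)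
    (hPS : P (↑S)ᶜ = 0) (hQT : Q Tᶜ = 0) :
    ∫ y, sqDistToFinset S y ∂Q ≤ W2sq P Q := by
  refine le_csInf ⟨_, P.prod Q, inferInstance, by simp, by simp, rfl⟩ ?_
  rintro r ⟨π, hπ, hfst, hsnd, rfl⟩
  have hS : ∀ᵐ p ∂π, p.1 ∈ S :=
    ae_of_ae_map measurable_fst.aemeasurable (hfst ▸ mem_ae_iff.2 hPS)
  have hT' : ∀ᵐ p ∂π, p.2 ∈ T :=
    ae_of_ae_map measurable_snd.aemeasurable (hsnd ▸ mem_ae_iff.2 hQT)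
  -- Without integrability both Bochner integrals below could be the junk value `0`.
  have hint (f : X × X → ℝ) : Integrable f π :=
    integrable_of_ae_mem_finite (S.finite_toSet.prod hT) (hS.and hT') f
  calc ∫ y, sqDistToFinset S y ∂Q = ∫ p, sqDistToFinset S p.2 ∂π := by
        rw [← hsnd, integral_map measurable_snd.aemeasurable
          (hsnd ▸ integrable_of_ae_mem_finite hT (mem_ae_iff.2 hQT) _).aestronglyMeasurable]
    _ ≤ ∫ p, dist p.1 p.2 ^ 2 ∂π := by
        refine integral_mono_ae (hint _) (hint _) ?_
        filter_upwards [hS] with p hp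
        simpa only [dist_comm] using sqDistToFinset_le hp p.2

theorem W2sq_empiricalMeasure_le {n : ℕ} (hn : 0 < n) (a b : Fin n → X) :
    W2sq (empiricalMeasure a) (empiricalMeasure b) ≤
      (1 / (n : ℝ)) * ∑ i, dist (a i) (b i) ^ 2 := by
  have := isProbabilityMeasure_empiricalMeasure hn fun i => (a i, b i)
  calc W2sq (empiricalMeasure a) (empiricalMeasure b)
      ≤ ∫ p, dist p.1 p.2 ^ 2 ∂empiricalMeasure fun i => (a i, b i) :=
        W2sq_le_integral (map_empiricalMeasure measurable_fst _)
          (map_empiricalMeasure measurable_snd _)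
    _ = _ := integral_empiricalMeasure _ fun p : X × X => dist p.1 p.2 ^ 2

end Transport

theorem wasserstein_kmeans_equivalence_general {X : Type*} [MetricSpace X] [MeasurableSpace X]
    [BorelSpace X] {n k : ℕ} (hn : 0 < n) (x : Fin n → X) :
    sInf {r : ℝ | ∃ P : Measure X, IsProbabilityMeasure P ∧
        (∃ S : Finset X, S.card ≤ k ∧ P ((↑S : Set X)ᶜ) = 0) ∧
        r = W2sq P ((n : ℝ≥0∞)⁻¹ • ∑ i : Fin n, Measure.dirac (x i))}
      = sInf {r : ℝ | ∃ S : Finset X, S.Nonempty ∧ S.card ≤ k ∧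
        r = (1 / (n : ℝ)) * ∑ i : Fin n, sInf ((fun s => dist (x i) s ^ 2) '' (↑S : Set X))} := by
  have hPn := isProbabilityMeasure_empiricalMeasure hn x
  have hPn_range : empiricalMeasure x (Set.range x)ᶜ = 0 :=
    empiricalMeasure_apply_eq_zero (Set.finite_range x).measurableSet.compl
      fun i hi => hi ⟨i, rfl⟩
  refine csInf_eq_csInf_of_forall_exists_le ?_ ?_
  · rintro _ ⟨P, hP, ⟨S, hSk, hPS⟩, rfl⟩
    have hS : S.Nonempty := Finset.nonempty_iff_ne_empty.2 fun h => by simp [h] at hPS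
    refine ⟨_, ⟨S, hS, hSk, rfl⟩, ?_⟩
    have := integral_sqDistToFinset_le_W2sq (Set.finite_range x) hPS hPn_range
    rwa [integral_empiricalMeasure] at this
  · rintro _ ⟨S, hS, hSk, rfl⟩
    choose σ hσS hσ using fun i => exists_mem_sqDistToFinset_eq hS (x i)
    have hPσ := isProbabilityMeasure_empiricalMeasure hn σ
    have hPσS : empiricalMeasure σ (↑S)ᶜ = 0 :=
      empiricalMeasure_apply_eq_zero S.finite_toSet.measurableSet.compl fun i hi => hi (hσS i)
    refine ⟨_, ⟨_, hPσ, ⟨S, hSk, hPσS⟩, rfl⟩, ?_⟩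
    calc W2sq (empiricalMeasure σ) (empiricalMeasure x)
        ≤ (1 / (n : ℝ)) * ∑ i, dist (σ i) (x i) ^ 2 := W2sq_empiricalMeasure_le hn σ x
      _ = _ := by simp only [dist_comm (σ _), hσ, sqDistToFinset]

/-- the minimization of `W₂(P, Pₙ)²` over probability measures `P` supported on
at most `k` points equals the k-means objective
`min_{S ⊆ X, |S| ≤ k} (1/n) ∑ᵢ min_{s ∈ S} d(xᵢ, s)²`. -/
theorem wasserstein_kmeans_equivalence {X : Type*} [MetricSpace X] [MeasurableSpace X]
    [BorelSpace X] {n k : ℕ} (hn : 0 < n) (hk : 1 ≤ k) (x : Fin n → X) :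
    sInf {r : ℝ | ∃ P : Measure X, IsProbabilityMeasure P ∧
        (∃ S : Finset X, S.card ≤ k ∧ P ((↑S : Set X)ᶜ) = 0) ∧
        r = W2sq P ((n : ℝ≥0∞)⁻¹ • ∑ i : Fin n, Measure.dirac (x i))}
      = sInf {r : ℝ | ∃ S : Finset X, S.Nonempty ∧ S.card ≤ k ∧
        r = (1 / (n : ℝ)) * ∑ i : Fin n, sInf ((fun s => dist (x i) s ^ 2) '' (↑S : Set X))} :=
  wasserstein_kmeans_equivalence_general hn x
end
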